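/- arXiv:nlin/0212045 — 6 statements merged into one kernel-verified Lean document; each statement's English description precedes it below -/
import Mathlib

section
/- Let f and g be smooth functions of x, t, u and finitely many x-derivatives of u, and let λ ≠ 0 be a real constant. Define the one-forms ω¹ = f dx + (g_x + f g) dt, ω² = λ dx + λ g dt, ω³ = −λ dx − λ g dt, evaluated on a smooth function u(x,t). If u(x,t) satisfies −D_t f + D_x(g_x + f g) = 0, then the structure equations dω¹ = ω³ ∧ ω², dω² = ω¹ ∧ ω³, dω³ = ω¹ ∧ ω² hold. -/
noncomputable section

/-- Partial derivative in the first variable. -/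
def pdx (f : ℝ → ℝ → ℝ) (x t : ℝ) : ℝ := deriv (fun x' => f x' t) x

/-- Partial derivative in the second variable. -/
def pdt (f : ℝ → ℝ → ℝ) (x t : ℝ) : ℝ := deriv (fun t' => f x t') t

/-- Smoothness of a function of two real variables. -/
def Smooth2 (f : ℝ → ℝ → ℝ) : Prop := ContDiff ℝ (⊤ : ℕ∞) (fun p : ℝ × ℝ => f p.1 p.2)

/-- if u(x,t) (already substituted into f, g) satisfies
`-D_t f + D_x (g_x + f g) = 0`, then the one-forms
ω¹ = f dx + (g_x + fg) dt, ω² = λ dx + λ g dt, ω³ = -λ dx - λ g dt satisfy the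
pseudo-spherical structure equations (written in coordinates on ℝ²). -/
theorem burgers_family_pss (f g : ℝ → ℝ → ℝ) (hf : Smooth2 f) (hg : Smooth2 g)
    (lam : ℝ) (hlam : lam ≠ 0)
    (heq : ∀ x t, - pdt f x t + pdx (fun a b => pdx g a b + f a b * g a b) x t = 0) :
    ∀ x t : ℝ,
      (pdx (fun a b => pdx g a b + f a b * g a b) x t - pdt f x t
        = (-lam) * (lam * g x t) - (-(lam * g x t)) * lam) ∧
      (pdx (fun a b => lam * g a b) x t - pdt (fun _ _ => lam) x t
        = f x t * (-(lam * g x t)) - (pdx g x t + f x t * g x t) * (-lam)) ∧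
      (pdx (fun a b => -(lam * g a b)) x t - pdt (fun _ _ => -lam) x t
        = f x t * (lam * g x t) - (pdx g x t + f x t * g x t) * lam) := by
  intro x t
  have hgx : DifferentiableAt ℝ (fun x' => g x' t) x := by
    have := (hg.differentiable (by simp)).comp
      ((differentiable_id.prodMk (differentiable_const t)) : Differentiable ℝ (fun x' : ℝ => (x', t)))
    exact this.differentiableAt
  refine ⟨?_, ?_, ?_⟩
  · have h := heq x t
    have h0 : (-lam) * (lam * g x t) - (-(lam * g x t)) * lam = 0 := by ring
    linarith
  · have h1 : pdx (fun a b => lam * g a b) x t = lam * pdx g x t := by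
      simp only [pdx]; rw [deriv_const_mul _ hgx]
    have h2 : pdt (fun _ _ : ℝ => lam) x t = 0 := by simp [pdt]
    rw [h1, h2]; ring
  · have h1 : pdx (fun a b => -(lam * g a b)) x t = -(lam * pdx g x t) := by
      simp only [pdx]
      rw [deriv.fun_neg, deriv_const_mul _ hgx]
    have h2 : pdt (fun _ _ : ℝ => -lam) x t = 0 := by simp [pdt]
    rw [h1, h2]; ring
end
end

section
/- The Burgers equation u_t = u_xx + u u_x is of pseudo-spherical type: with f = g = u/2 and λ ≠ 0, the one-forms ω¹ = (u/2) dx + (u_x/2 + u²/4) dt, ω² = λ dx + (λ u/2) dt, ω³ = −λ dx − (λ u/2) dt satisfy the structure equations dω¹ = ω³ ∧ ω², dω² = ω¹ ∧ ω³, dω³ = ω¹ ∧ ω² whenever u(x,t) solves the Burgers equation. -/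
noncomputable section

lemma sliceX {u : ℝ → ℝ → ℝ} (hu : Smooth2 u) (t : ℝ) :
    ContDiff ℝ (⊤ : ℕ∞) (fun a => u a t) :=
  hu.comp (contDiff_id.prodMk contDiff_const)

lemma sliceT {u : ℝ → ℝ → ℝ} (hu : Smooth2 u) (x : ℝ) :
    ContDiff ℝ (⊤ : ℕ∞) (fun b => u x b) :=
  hu.comp (contDiff_const.prodMk contDiff_id)

/-- the Burgers equation u_t = u_xx + u u_x is of pseudo-spherical type:
with f = g = u/2 and λ ≠ 0, the associated one-forms satisfy the structure equations
(in coordinates on ℝ²) whenever u solves Burgers. -/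
theorem burgers_pss (u : ℝ → ℝ → ℝ) (hu : Smooth2 u) (lam : ℝ) (hlam : lam ≠ 0)
    (heq : ∀ x t, pdt u x t = pdx (fun a b => pdx u a b) x t + u x t * pdx u x t) :
    ∀ x t : ℝ,
      (pdx (fun a b => pdx u a b / 2 + (u a b) ^ 2 / 4) x t
          - pdt (fun a b => u a b / 2) x t
        = (-lam) * (lam * u x t / 2) - (-(lam * u x t / 2)) * lam) ∧
      (pdx (fun a b => lam * u a b / 2) x t - pdt (fun _ _ => lam) x t
        = (u x t / 2) * (-(lam * u x t / 2))
          - (pdx u x t / 2 + (u x t) ^ 2 / 4) * (-lam)) ∧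
      (pdx (fun a b => -(lam * u a b / 2)) x t - pdt (fun _ _ => -lam) x t
        = (u x t / 2) * (lam * u x t / 2)
          - (pdx u x t / 2 + (u x t) ^ 2 / 4) * lam) := by
  intro x t
  have hx : Differentiable ℝ (fun a => u a t) := (sliceX hu t).differentiable (by simp)
  have ht : Differentiable ℝ (fun b => u x b) := (sliceT hu x).differentiable (by simp)
  have hdx : Differentiable ℝ (fun a => deriv (fun a' => u a' t) a) := by
    have h1 : ContDiff ℝ ((⊤ : ℕ∞) : WithTop ℕ∞) (fun a => u a t) := (sliceX hu t).of_le (by simp)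
    exact (contDiff_infty_iff_deriv.mp h1).2.differentiable (by simp)
  have e1 : pdx (fun a b => pdx u a b / 2 + (u a b) ^ 2 / 4) x t
      = pdx (fun a b => pdx u a b) x t / 2 + 2 * u x t * pdx u x t / 4 := by
    show deriv (fun a => deriv (fun a' => u a' t) a / 2 + (u a t) ^ 2 / 4) x = _
    rw [deriv_fun_add ((hdx x).div_const 2) (((hx x).fun_pow 2).div_const 4),
      deriv_div_const, deriv_div_const, deriv_fun_pow (hx x)]
    simp [pdx]
  have e2 : pdt (fun a b => u a b / 2) x t = pdt u x t / 2 := by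
    show deriv (fun b => u x b / 2) t = _
    rw [deriv_div_const]; rfl
  have e3 : pdx (fun a b => lam * u a b / 2) x t = lam * pdx u x t / 2 := by
    show deriv (fun a => lam * u a t / 2) x = _
    rw [deriv_div_const, deriv_const_mul _ (hx x)]; rfl
  have e4 : pdx (fun a b => -(lam * u a b / 2)) x t = -(lam * pdx u x t / 2) := by
    show deriv (fun a => -(lam * u a t / 2)) x = _
    rw [deriv.fun_neg, deriv_div_const, deriv_const_mul _ (hx x)]; rfl
  have e5 : pdt (fun _ _ : ℝ => lam) x t = 0 := by
    show deriv (fun _ => lam) t = 0; simp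
  have e6 : pdt (fun _ _ : ℝ => -lam) x t = 0 := by
    show deriv (fun _ => -lam) t = 0; simp
  have hb := heq x t
  refine ⟨?_, ?_, ?_⟩
  · rw [e1, e2]
    have : pdx (fun a b => pdx u a b) x t = pdt u x t - u x t * pdx u x t := by
      linarith
    rw [this]; ring
  · rw [e3, e5]; ring
  · rw [e4, e6]; ring
end
end

section
/- Let ω¹, ω², ω³ be one-forms on an open subset of ℝ² satisfying the structure equations dω¹ = ω³ ∧ ω², dω² = ω¹ ∧ ω³, dω³ = ω¹ ∧ ω². Then the Pfaffian equation dρ = −ω³ + ω¹ sin ρ − ω² cos ρ, viewed as a first-order PDE system for a function ρ(x,t), is completely integrable: its compatibility condition (equality of mixed partial derivatives ρ_xt = ρ_tx) holds identically as a consequence of the structure equations. -/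
noncomputable section

/-- if the one-forms ωⁱ = f_{i1} dx + f_{i2} dt satisfy the pseudo-spherical
structure equations, then the Pfaffian system
ρ_x = -f₃₁ + f₁₁ sin ρ - f₂₁ cos ρ, ρ_t = -f₃₂ + f₁₂ sin ρ - f₂₂ cos ρ
is completely integrable: the cross-derivative compatibility condition holds
identically in (x,t,ρ). -/
theorem pfaffian_completely_integrable
    (f11 f12 f21 f22 f31 f32 : ℝ → ℝ → ℝ)
    (h11 : Smooth2 f11) (h12 : Smooth2 f12) (h21 : Smooth2 f21)
    (h22 : Smooth2 f22) (h31 : Smooth2 f31) (h32 : Smooth2 f32)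
    (hstruct : ∀ x t : ℝ,
      pdx f12 x t - pdt f11 x t = f31 x t * f22 x t - f32 x t * f21 x t ∧
      pdx f22 x t - pdt f21 x t = f11 x t * f32 x t - f12 x t * f31 x t ∧
      pdx f32 x t - pdt f31 x t = f11 x t * f22 x t - f12 x t * f21 x t) :
    ∀ x t r : ℝ,
      (- pdt f31 x t + pdt f11 x t * Real.sin r - pdt f21 x t * Real.cos r)
        + (f11 x t * Real.cos r + f21 x t * Real.sin r)
          * (- f32 x t + f12 x t * Real.sin r - f22 x t * Real.cos r)
      = (- pdx f32 x t + pdx f12 x t * Real.sin r - pdx f22 x t * Real.cos r)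
        + (f12 x t * Real.cos r + f22 x t * Real.sin r)
          * (- f31 x t + f11 x t * Real.sin r - f21 x t * Real.cos r) := by
  intro x t r
  obtain ⟨h1, h2, h3⟩ := hstruct x t
  have hs := Real.sin_sq_add_cos_sq r
  linear_combination h3 - Real.sin r * h1 + Real.cos r * h2
    - (f11 x t * f22 x t - f12 x t * f21 x t) * hs
end
end

section
/- Let ρ(x,t) solve the completely integrable Pfaffian system ρ_x = −f_{31} + f_{11} sin ρ − f_{21} cos ρ, ρ_t = −f_{32} + f_{12} sin ρ − f_{22} cos ρ, where the one-forms ωⁱ = f_{i1} dx + f_{i2} dt satisfy the pseudo-spherical structure equations. Then the one-form θ¹ = ω¹ cos ρ + ω² sin ρ is closed: D_t(f_{11} cos ρ + f_{21} sin ρ) = D_x(f_{12} cos ρ + f_{22} sin ρ). -/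
noncomputable section

lemma hasDerivAt_pdx (f : ℝ → ℝ → ℝ) (hf : Smooth2 f) (x t : ℝ) :
    HasDerivAt (fun x' => f x' t) (pdx f x t) x := by
  have hd : DifferentiableAt ℝ (fun x' => f x' t) x := by
    have h1 : Differentiable ℝ (fun p : ℝ × ℝ => f p.1 p.2) := hf.differentiable (by simp)
    exact (h1.comp (differentiable_id.prodMk (differentiable_const t))).differentiableAt
  exact hd.hasDerivAt

lemma hasDerivAt_pdt (f : ℝ → ℝ → ℝ) (hf : Smooth2 f) (x t : ℝ) :
    HasDerivAt (fun t' => f x t') (pdt f x t) t := by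
  have hd : DifferentiableAt ℝ (fun t' => f x t') t := by
    have h1 : Differentiable ℝ (fun p : ℝ × ℝ => f p.1 p.2) := hf.differentiable (by simp)
    exact (h1.comp ((differentiable_const x).prodMk differentiable_id)).differentiableAt
  exact hd.hasDerivAt

/-- if ρ solves the Pfaffian system associated to one-forms satisfying the
pseudo-spherical structure equations, then θ¹ = ω¹ cos ρ + ω² sin ρ is closed. -/
theorem theta_one_closed
    (f11 f12 f21 f22 f31 f32 : ℝ → ℝ → ℝ)
    (h11 : Smooth2 f11) (h12 : Smooth2 f12) (h21 : Smooth2 f21)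
    (h22 : Smooth2 f22) (h31 : Smooth2 f31) (h32 : Smooth2 f32)
    (hstruct : ∀ x t : ℝ,
      pdx f12 x t - pdt f11 x t = f31 x t * f22 x t - f32 x t * f21 x t ∧
      pdx f22 x t - pdt f21 x t = f11 x t * f32 x t - f12 x t * f31 x t ∧
      pdx f32 x t - pdt f31 x t = f11 x t * f22 x t - f12 x t * f21 x t)
    (ρ : ℝ → ℝ → ℝ) (hρ : Smooth2 ρ)
    (hρx : ∀ x t, pdx ρ x t
      = - f31 x t + f11 x t * Real.sin (ρ x t) - f21 x t * Real.cos (ρ x t))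
    (hρt : ∀ x t, pdt ρ x t
      = - f32 x t + f12 x t * Real.sin (ρ x t) - f22 x t * Real.cos (ρ x t)) :
    ∀ x t : ℝ,
      pdt (fun a b => f11 a b * Real.cos (ρ a b) + f21 a b * Real.sin (ρ a b)) x t
        = pdx (fun a b => f12 a b * Real.cos (ρ a b) + f22 a b * Real.sin (ρ a b)) x t := by
  intro x t
  have hρt' : HasDerivAt (fun b => ρ x b) (pdt ρ x t) t := hasDerivAt_pdt ρ hρ x t
  have hρx' : HasDerivAt (fun a => ρ a t) (pdx ρ x t) x := hasDerivAt_pdx ρ hρ x t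
  have hL : HasDerivAt (fun b => f11 x b * Real.cos (ρ x b) + f21 x b * Real.sin (ρ x b))
      (pdt f11 x t * Real.cos (ρ x t) +
        f11 x t * (-Real.sin (ρ x t) * pdt ρ x t) +
        (pdt f21 x t * Real.sin (ρ x t) + f21 x t * (Real.cos (ρ x t) * pdt ρ x t))) t :=
    ((hasDerivAt_pdt f11 h11 x t).mul hρt'.cos).add
      ((hasDerivAt_pdt f21 h21 x t).mul hρt'.sin)
  have hR : HasDerivAt (fun a => f12 a t * Real.cos (ρ a t) + f22 a t * Real.sin (ρ a t))
      (pdx f12 x t * Real.cos (ρ x t) +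
        f12 x t * (-Real.sin (ρ x t) * pdx ρ x t) +
        (pdx f22 x t * Real.sin (ρ x t) + f22 x t * (Real.cos (ρ x t) * pdx ρ x t))) x :=
    ((hasDerivAt_pdx f12 h12 x t).mul hρx'.cos).add
      ((hasDerivAt_pdx f22 h22 x t).mul hρx'.sin)
  have eL := hL.deriv
  have eR := hR.deriv
  show deriv _ t = deriv _ x
  rw [eL, eR, hρx x t, hρt x t]
  obtain ⟨e1, e2, e3⟩ := hstruct x t
  have hsc : Real.sin (ρ x t) ^ 2 + Real.cos (ρ x t) ^ 2 = 1 :=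
    Real.sin_sq_add_cos_sq (ρ x t)
  linear_combination (-Real.cos (ρ x t)) * e1 - Real.sin (ρ x t) * e2
end
end

section
/- For any real parameter λ, the one-forms ω¹ = (1−u) dx + (−u_xx + λu_x − λ²u − 2u² + λ² + 2u) dt, ω² = λ dx + (λ³ + 2λu − 2u_x) dt, ω³ = (−1−u) dx + (−u_xx + λu_x − λ²u − 2u² − λ² − 2u) dt satisfy the structure equations dω¹ = ω³ ∧ ω², dω² = ω¹ ∧ ω³, dω³ = ω¹ ∧ ω² whenever u(x,t) solves the KdV equation u_t = u_xxx + 6u u_x. -/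
noncomputable section

lemma hasDerivAt_x' {f : ℝ → ℝ → ℝ} (hf : Smooth2 f) (x t : ℝ) :
    HasDerivAt (fun x' => f x' t) (fderiv ℝ (fun q : ℝ × ℝ => f q.1 q.2) (x, t) (1, 0)) x := by
  have h1 := (hf.differentiable (by simp) (x, t)).hasFDerivAt
  have h2 : HasDerivAt (fun x' : ℝ => ((x' : ℝ), t)) ((1 : ℝ), (0 : ℝ)) x :=
    HasDerivAt.prodMk (hasDerivAt_id x) (hasDerivAt_const x t)
  exact h1.comp_hasDerivAt x h2

lemma hasDerivAt_t' {f : ℝ → ℝ → ℝ} (hf : Smooth2 f) (x t : ℝ) :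
    HasDerivAt (fun t' => f x t') (fderiv ℝ (fun q : ℝ × ℝ => f q.1 q.2) (x, t) (0, 1)) t := by
  have h1 := (hf.differentiable (by simp) (x, t)).hasFDerivAt
  have h2 : HasDerivAt (fun t' : ℝ => ((x : ℝ), t')) ((0 : ℝ), (1 : ℝ)) t :=
    HasDerivAt.prodMk (hasDerivAt_const t x) (hasDerivAt_id t)
  exact h1.comp_hasDerivAt t h2

lemma Smooth2.hasDerivAt_x {f : ℝ → ℝ → ℝ} (hf : Smooth2 f) (x t : ℝ) :
    HasDerivAt (fun x' => f x' t) (pdx f x t) x :=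
  (hasDerivAt_x' hf x t).differentiableAt.hasDerivAt

lemma Smooth2.hasDerivAt_t {f : ℝ → ℝ → ℝ} (hf : Smooth2 f) (x t : ℝ) :
    HasDerivAt (fun t' => f x t') (pdt f x t) t :=
  (hasDerivAt_t' hf x t).differentiableAt.hasDerivAt

lemma pdx_eq_fderiv {f : ℝ → ℝ → ℝ} (hf : Smooth2 f) (x t : ℝ) :
    pdx f x t = fderiv ℝ (fun q : ℝ × ℝ => f q.1 q.2) (x, t) (1, 0) :=
  (hasDerivAt_x' hf x t).deriv

lemma Smooth2.pdx_smooth {f : ℝ → ℝ → ℝ} (hf : Smooth2 f) : Smooth2 (pdx f) := by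
  have hF : ContDiff ℝ (⊤ : ℕ∞) (fun p : ℝ × ℝ => fderiv ℝ (fun q : ℝ × ℝ => f q.1 q.2) p ((1 : ℝ), (0 : ℝ))) :=
    (hf.fderiv_right (le_refl _)).clm_apply contDiff_const
  have he : (fun p : ℝ × ℝ => pdx f p.1 p.2)
      = fun p : ℝ × ℝ => fderiv ℝ (fun q : ℝ × ℝ => f q.1 q.2) p ((1 : ℝ), (0 : ℝ)) := by
    funext p
    exact pdx_eq_fderiv hf p.1 p.2
  unfold Smooth2
  rw [he]
  exact hF

/-- coefficient of dt in ω¹ for KdV -/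
def kdvF12 (u : ℝ → ℝ → ℝ) (lam : ℝ) : ℝ → ℝ → ℝ := fun a b =>
  -(pdx (fun c d => pdx u c d) a b) + lam * pdx u a b - lam ^ 2 * u a b
    - 2 * (u a b) ^ 2 + lam ^ 2 + 2 * u a b

/-- coefficient of dt in ω³ for KdV -/
def kdvF32 (u : ℝ → ℝ → ℝ) (lam : ℝ) : ℝ → ℝ → ℝ := fun a b =>
  -(pdx (fun c d => pdx u c d) a b) + lam * pdx u a b - lam ^ 2 * u a b
    - 2 * (u a b) ^ 2 - lam ^ 2 - 2 * u a b

/-- the KdV equation u_t = u_xxx + 6uu_x describes pseudo-spherical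
surfaces with the classical one-forms of Sasaki and Chern--Tenenblat. -/
theorem kdv_pss (u : ℝ → ℝ → ℝ) (hu : Smooth2 u) (lam : ℝ)
    (heq : ∀ x t, pdt u x t
      = pdx (fun a b => pdx (fun c d => pdx u c d) a b) x t + 6 * u x t * pdx u x t) :
    ∀ x t : ℝ,
      (pdx (kdvF12 u lam) x t - pdt (fun a b => 1 - u a b) x t
        = (-1 - u x t) * (lam ^ 3 + 2 * lam * u x t - 2 * pdx u x t)
          - kdvF32 u lam x t * lam) ∧
      (pdx (fun a b => lam ^ 3 + 2 * lam * u a b - 2 * pdx u a b) x t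
          - pdt (fun _ _ => lam) x t
        = (1 - u x t) * kdvF32 u lam x t - kdvF12 u lam x t * (-1 - u x t)) ∧
      (pdx (kdvF32 u lam) x t - pdt (fun a b => -1 - u a b) x t
        = (1 - u x t) * (lam ^ 3 + 2 * lam * u x t - 2 * pdx u x t)
          - kdvF12 u lam x t * lam) := by

  intro x t
  have hux : Smooth2 (pdx u) := hu.pdx_smooth
  have huxx : Smooth2 (pdx (pdx u)) := hux.pdx_smooth
  have hU : HasDerivAt (fun x' => u x' t) (pdx u x t) x := hu.hasDerivAt_x x t
  have hUx : HasDerivAt (fun x' => pdx u x' t) (pdx (pdx u) x t) x := hux.hasDerivAt_x x t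
  have hUxx : HasDerivAt (fun x' => pdx (pdx u) x' t) (pdx (pdx (pdx u)) x t) x :=
    huxx.hasDerivAt_x x t
  have hUt : HasDerivAt (fun t' => u x t') (pdt u x t) t := hu.hasDerivAt_t x t
  have hsq : HasDerivAt (fun x' => (u x' t) ^ 2) (2 * u x t * pdx u x t) x := by
    simpa using hU.fun_pow 2
  have h12 : HasDerivAt (fun x' => kdvF12 u lam x' t)
      (-(pdx (pdx (pdx u)) x t) + lam * pdx (pdx u) x t - lam ^ 2 * pdx u x t
        - 2 * (2 * u x t * pdx u x t) + 2 * pdx u x t) x :=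
    (((((hUxx.neg.add (hUx.const_mul lam)).sub (hU.const_mul (lam ^ 2))).sub
      (hsq.const_mul 2)).add_const (lam ^ 2)).add (hU.const_mul 2))
  have h32 : HasDerivAt (fun x' => kdvF32 u lam x' t)
      (-(pdx (pdx (pdx u)) x t) + lam * pdx (pdx u) x t - lam ^ 2 * pdx u x t
        - 2 * (2 * u x t * pdx u x t) - 2 * pdx u x t) x :=
    (((((hUxx.neg.add (hUx.const_mul lam)).sub (hU.const_mul (lam ^ 2))).sub
      (hsq.const_mul 2)).sub_const (lam ^ 2)).sub (hU.const_mul 2))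
  have h2 : HasDerivAt (fun x' => lam ^ 3 + 2 * lam * u x' t - 2 * pdx u x' t)
      (2 * lam * pdx u x t - 2 * pdx (pdx u) x t) x :=
    ((hU.const_mul (2 * lam)).const_add (lam ^ 3)).sub (hUx.const_mul 2)
  have e12 : pdx (kdvF12 u lam) x t
      = -(pdx (pdx (pdx u)) x t) + lam * pdx (pdx u) x t - lam ^ 2 * pdx u x t
        - 2 * (2 * u x t * pdx u x t) + 2 * pdx u x t := h12.deriv
  have e32 : pdx (kdvF32 u lam) x t
      = -(pdx (pdx (pdx u)) x t) + lam * pdx (pdx u) x t - lam ^ 2 * pdx u x t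
        - 2 * (2 * u x t * pdx u x t) - 2 * pdx u x t := h32.deriv
  have e2 : pdx (fun a b => lam ^ 3 + 2 * lam * u a b - 2 * pdx u a b) x t
      = 2 * lam * pdx u x t - 2 * pdx (pdx u) x t := h2.deriv
  have et1 : pdt (fun a b => 1 - u a b) x t = -pdt u x t := (hUt.const_sub 1).deriv
  have et2 : pdt (fun _ _ : ℝ => lam) x t = 0 := by simp [pdt]
  have et3 : pdt (fun a b => -1 - u a b) x t = -pdt u x t := (hUt.const_sub (-1)).deriv
  have heq' : pdt u x t = pdx (pdx (pdx u)) x t + 6 * u x t * pdx u x t := heq x t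
  have hk12 : kdvF12 u lam x t
      = -(pdx (pdx u) x t) + lam * pdx u x t - lam ^ 2 * u x t
        - 2 * (u x t) ^ 2 + lam ^ 2 + 2 * u x t := rfl
  have hk32 : kdvF32 u lam x t
      = -(pdx (pdx u) x t) + lam * pdx u x t - lam ^ 2 * u x t
        - 2 * (u x t) ^ 2 - lam ^ 2 - 2 * u x t := rfl
  refine ⟨?_, ?_, ?_⟩
  · rw [e12, et1, hk32, heq']; ring
  · rw [e2, et2, hk12, hk32]; ring
  · rw [e32, et3, hk12, heq']; ring
end
end

section
/- Fix ε ∈ {0,1} and λ ≠ 0, set m = u_xx − εu, and suppose γ(x,t) satisfies m = γ_x + γ²/(2λ) − (ε/2)λ. If additionally −γ_t = −(1/2)(u/λ + 1)γ² + u_x γ + (u m − (1/2)ελu + (1/2)ελ²), then the conservation law γ_t = λ(u_x − γ − uγ/λ)_x holds, i.e. γ_t = λ u_xx − λγ_x − (uγ)_x. -/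
noncomputable section

/-- m = u_xx - ε u -/
def mch (u : ℝ → ℝ → ℝ) (ε : ℝ) : ℝ → ℝ → ℝ := fun a b =>
  pdx (fun c d => pdx u c d) a b - ε * u a b

lemma smooth2_diffx {f : ℝ → ℝ → ℝ} (hf : Smooth2 f) (x t : ℝ) :
    DifferentiableAt ℝ (fun x' => f x' t) x := by
  have : ContDiff ℝ (⊤ : ℕ∞) (fun x' : ℝ => f x' t) := by
    have h1 : ContDiff ℝ (⊤ : ℕ∞) (fun x' : ℝ => (x', t)) :=
      (contDiff_id.prodMk contDiff_const)
    exact hf.comp h1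
  exact (this.differentiable (by simp)).differentiableAt

lemma pdx_mul {u γ : ℝ → ℝ → ℝ} (hu : Smooth2 u) (hγ : Smooth2 γ) (x t : ℝ) :
    pdx (fun a b => u a b * γ a b) x t = pdx u x t * γ x t + u x t * pdx γ x t := by
  unfold pdx
  exact deriv_mul (smooth2_diffx hu x t) (smooth2_diffx hγ x t)

/-- if γ satisfies the Miura-type relation
m = γ_x + γ²/(2λ) - (ε/2)λ with m = u_xx - εu, and the evolution equation
-γ_t = -(1/2)(u/λ + 1)γ² + u_x γ + (um - (1/2)ελu + (1/2)ελ²),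
then the conservation law γ_t = λ(u_x - γ - uγ/λ)_x holds. -/
theorem ch_hs_conservation_law (u γ : ℝ → ℝ → ℝ) (hu : Smooth2 u) (hγ : Smooth2 γ)
    (ε lam : ℝ) (hε : ε = 0 ∨ ε = 1) (hlam : lam ≠ 0)
    (hmiura : ∀ x t, mch u ε x t
      = pdx γ x t + (γ x t) ^ 2 / (2 * lam) - ε / 2 * lam)
    (hev : ∀ x t, - pdt γ x t
      = -(1 / 2) * (u x t / lam + 1) * (γ x t) ^ 2 + pdx u x t * γ x t
        + (u x t * mch u ε x t - 1 / 2 * ε * lam * u x t + 1 / 2 * ε * lam ^ 2)) :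
    ∀ x t : ℝ,
      pdt γ x t
        = lam * pdx (fun a b => pdx u a b) x t - lam * pdx γ x t
          - pdx (fun a b => u a b * γ a b) x t := by
  intro x t
  have hm := hmiura x t
  have he := hev x t
  have hprod := pdx_mul hu hγ x t
  have hmdef : mch u ε x t = pdx (fun a b => pdx u a b) x t - ε * u x t := rfl
  rw [hprod]
  rw [hmdef] at hm he
  set U := pdx (fun a b => pdx u a b) x t with hU
  set G := pdx γ x t with hG
  set Ux := pdx u x t with hUx
  set T := pdt γ x t with hT
  set g := γ x t with hg
  set v := u x t with hv
  have hm2 : 4 * lam * U - 4 * lam * (ε * v) = 4 * lam * G + 2 * g ^ 2 - 2 * ε * lam ^ 2 := by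
    have : (2 * lam) ≠ 0 := by positivity
    field_simp at hm
    linarith [hm]
  have he2 : 4 * lam * T = 2 * lam * g ^ 2 + 2 * v * g ^ 2 - 4 * lam * Ux * g
      - 4 * lam * v * (U - ε * v) + 2 * ε * lam ^ 2 * v - 2 * ε * lam ^ 3 := by
    field_simp at he
    linarith [he]
  have h4 : (4 : ℝ) * lam ≠ 0 := by
    simp [hlam]
  have goal4 : 4 * lam * T = 4 * lam * (lam * U - lam * G - (Ux * g + v * G)) := by
    linear_combination he2 - (lam + v) * hm2
  have := mul_left_cancel₀ h4 goal4
  linarith [this]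
end
end
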